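/- Let μ ∈ ℝⁿ and Σ symmetric positive definite. If KL(N(μ,Σ) ∥ N(0,I)) ≥ M for M > 0, then KL(N(0,I) ∥ N(μ,Σ)) ≥ (1/2)(1/w₂(2M) - log(1/w₂(2M)) - 1), where w₂(2M) ∈ (1,∞) is the larger solution of x - log x = 1 + 2M. -/

import Mathlib

open Matrix

/-! Auxiliary scalar lemmas for `stmt14`. -/

noncomputable def klf (x : ℝ) : ℝ := x - Real.log x - 1

lemma klf_nonneg {x : ℝ} (hx : 0 < x) : 0 ≤ klf x := by
  have := Real.log_le_sub_one_of_pos hx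
  unfold klf; linarith

lemma klf_pos {x : ℝ} (hx : 0 < x) (hx1 : x ≠ 1) : 0 < klf x := by
  have := Real.log_lt_sub_one_of_pos hx hx1
  unfold klf; linarith

lemma klf_mono {a b : ℝ} (ha : 1 ≤ a) (hab : a ≤ b) : klf a ≤ klf b := by
  have ha0 : 0 < a := by linarith
  have hb0 : 0 < b := by linarith
  have h1 : Real.log b - Real.log a = Real.log (b / a) :=
    (Real.log_div (ne_of_gt hb0) (ne_of_gt ha0)).symm
  have h2 : Real.log (b / a) ≤ b / a - 1 := Real.log_le_sub_one_of_pos (by positivity)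
  have h3 : b / a - 1 ≤ b - a := by
    rw [div_sub_one (ne_of_gt ha0), div_le_iff₀ ha0]
    nlinarith
  unfold klf; linarith

lemma klf_strictMono {a b : ℝ} (ha : 1 ≤ a) (hab : a < b) : klf a < klf b := by
  have ha0 : 0 < a := by linarith
  have hb0 : 0 < b := by linarith
  have h1 : Real.log b - Real.log a = Real.log (b / a) :=
    (Real.log_div (ne_of_gt hb0) (ne_of_gt ha0)).symm
  have hne : b / a ≠ 1 := by
    intro h; rw [div_eq_one_iff_eq (ne_of_gt ha0)] at h; linarith
  have h2 : Real.log (b / a) < b / a - 1 := Real.log_lt_sub_one_of_pos (by positivity) hne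
  have h3 : b / a - 1 ≤ b - a := by
    rw [div_sub_one (ne_of_gt ha0), div_le_iff₀ ha0]
    nlinarith
  unfold klf; linarith

lemma klf_anti {a b : ℝ} (ha : 0 < a) (hab : a ≤ b) (hb : b ≤ 1) : klf b ≤ klf a := by
  have hb0 : 0 < b := lt_of_lt_of_le ha hab
  have h1 : Real.log a - Real.log b = Real.log (a / b) :=
    (Real.log_div (ne_of_gt ha) (ne_of_gt hb0)).symm
  have h2 : Real.log (a / b) ≤ a / b - 1 := Real.log_le_sub_one_of_pos (by positivity)
  have h4 : a / b - 1 ≤ (a - b) / b := by rw [div_sub_one (ne_of_gt hb0)]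
  have h5 : (a - b) / b ≤ a - b := by
    rw [div_le_iff₀ hb0]
    nlinarith
  unfold klf; linarith

lemma two_log_le {w : ℝ} (hw : 1 ≤ w) : 2 * Real.log w ≤ w - 1/w := by
  have hw0 : 0 < w := by linarith
  have h0 : 0 ≤ Real.log w := Real.log_nonneg hw
  have h1 : Real.log w ≤ Real.sinh (Real.log w) := Real.self_le_sinh_iff.2 h0
  rw [Real.sinh_eq] at h1
  rw [Real.exp_log hw0] at h1
  rw [Real.exp_neg, Real.exp_log hw0] at h1
  have : w⁻¹ = 1/w := by ring
  linarith [h1]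

lemma klf_inv_le {w : ℝ} (hw : 1 ≤ w) : klf (1/w) ≤ klf w := by
  have hw0 : 0 < w := by linarith
  have := two_log_le hw
  unfold klf
  rw [Real.log_div one_ne_zero (ne_of_gt hw0), Real.log_one]
  linarith

lemma pade_hasDeriv {w : ℝ} (hw : 0 < w) (hw1 : w + 1 ≠ 0) :
    HasDerivAt (fun x : ℝ => Real.log x - 2*(x-1)/(x+1)) (1/w - 4/(w+1)^2) w := by
  have h1 : HasDerivAt Real.log (1/w) w := by
    simpa [one_div] using Real.hasDerivAt_log (ne_of_gt hw)
  have h2 : HasDerivAt (fun x : ℝ => 2*(x-1)) 2 w := by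
    simpa using ((hasDerivAt_id w).sub_const 1).const_mul 2
  have h3 : HasDerivAt (fun x : ℝ => x+1) 1 w := (hasDerivAt_id w).add_const 1
  have h4 := h2.div h3 hw1
  have : (2 * (w + 1) - 2 * (w - 1) * 1) / (w + 1) ^ 2 = 4/(w+1)^2 := by ring
  rw [this] at h4
  exact h1.sub h4

lemma log_ge_pade {w : ℝ} (hw : 1 ≤ w) : 2*(w-1)/(w+1) ≤ Real.log w := by
  have key : MonotoneOn (fun x : ℝ => Real.log x - 2*(x-1)/(x+1)) (Set.Ici 1) := by
    apply monotoneOn_of_deriv_nonneg (convex_Ici 1)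
    · apply ContinuousOn.sub
      · exact fun x hx => (Real.continuousAt_log (by simp at hx; linarith)).continuousWithinAt
      · apply ContinuousOn.div
        · fun_prop
        · fun_prop
        · intro x hx; simp at hx; intro h; linarith
    · intro x hx
      rw [interior_Ici] at hx
      simp only [Set.mem_Ioi] at hx
      exact (pade_hasDeriv (by linarith) (by linarith)).differentiableAt.differentiableWithinAt
    · intro x hx
      rw [interior_Ici] at hx
      simp only [Set.mem_Ioi] at hx
      have hx0 : (0:ℝ) < x := by linarith
      rw [(pade_hasDeriv hx0 (by linarith)).deriv]
      rw [sub_nonneg, div_le_div_iff₀ (by positivity) hx0]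
      nlinarith
  have h := key (Set.mem_Ici.2 le_rfl) (Set.mem_Ici.2 hw) hw
  simp at h
  linarith

noncomputable def gfun (C t : ℝ) : ℝ := (C+2)/t + Real.log t + Real.log t / t - 2

lemma gfun_eq {C t : ℝ} (ht : 0 < t) : gfun C t = klf (1/t) + (C - klf t)/t := by
  unfold gfun klf
  rw [Real.log_div one_ne_zero (ne_of_gt ht), Real.log_one]
  field_simp
  ring

lemma gfun_hasDeriv {C t : ℝ} (ht : 0 < t) :
    HasDerivAt (gfun C) ((t - Real.log t - 1 - C)/t^2) t := by
  have hne := ne_of_gt ht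
  have h1 : HasDerivAt (fun x : ℝ => (C+2)/x) ((C+2) * -(t^2)⁻¹) t := by
    simpa [div_eq_mul_inv] using (hasDerivAt_inv hne).const_mul (C+2)
  have hlog : HasDerivAt Real.log t⁻¹ t := Real.hasDerivAt_log hne
  have h3 : HasDerivAt (fun x : ℝ => Real.log x / x) ((t⁻¹ * t - Real.log t * 1)/t^2) t :=
    hlog.div (hasDerivAt_id t) hne
  have h := ((h1.add hlog).add h3).sub_const 2
  refine h.congr_deriv ?_
  field_simp
  ring

lemma key_lemma {lam m v : ℝ} (hl : 0 < lam) (hm : 0 ≤ m) (hv : 1 ≤ v)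
    (heq : klf lam + m = klf v) : klf (1/v) ≤ klf (1/lam) + m/lam := by
  have hlv : lam ≤ v := by
    rcases le_or_gt lam 1 with h | h
    · linarith
    · by_contra hc
      push_neg at hc
      have := klf_strictMono hv hc
      linarith
  have hanti : AntitoneOn (gfun (klf v)) (Set.Icc lam v) := by
    apply antitoneOn_of_deriv_nonpos (convex_Icc lam v)
    · intro x hx
      have hx0 : 0 < x := lt_of_lt_of_le hl hx.1
      exact (gfun_hasDeriv (C := klf v) hx0).continuousAt.continuousWithinAt
    · intro x hx
      rw [interior_Icc] at hx
      have hx0 : 0 < x := lt_of_lt_of_le hl (le_of_lt hx.1)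
      exact (gfun_hasDeriv (C := klf v) hx0).differentiableAt.differentiableWithinAt
    · intro x hx
      rw [interior_Icc] at hx
      have hx0 : 0 < x := lt_of_lt_of_le hl (le_of_lt hx.1)
      rw [(gfun_hasDeriv (C := klf v) hx0).deriv]
      apply div_nonpos_of_nonpos_of_nonneg _ (by positivity)
      have hklf : klf x ≤ klf v := by
        rcases le_or_gt x 1 with h1 | h1
        · have := klf_anti hl (le_of_lt hx.1) h1
          linarith
        · exact klf_mono (le_of_lt h1) (le_of_lt hx.2)
      unfold klf at hklf ⊢; linarith
  have h := hanti (Set.mem_Icc.2 ⟨le_rfl, hlv⟩) (Set.mem_Icc.2 ⟨hlv, le_rfl⟩) hlv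
  rw [gfun_eq hl, gfun_eq (by linarith : (0:ℝ) < v)] at h
  have hme : klf v - klf lam = m := by linarith
  rw [hme] at h
  simp only [sub_self, zero_div, add_zero] at h
  exact h

noncomputable def hfun (T phi x : ℝ) : ℝ :=
  T * (1/x + Real.log x - 1) - phi * (x - Real.log x - 1)

lemma klf_one_div {x : ℝ} (hx : 0 < x) : klf (1/x) = 1/x + Real.log x - 1 := by
  unfold klf
  rw [Real.log_div one_ne_zero (ne_of_gt hx), Real.log_one]
  ring

lemma hfun_hasDeriv {T phi x : ℝ} (hx : 0 < x) :
    HasDerivAt (hfun T phi) (((x-1)/x) * (T/x - phi)) x := by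
  have hne := ne_of_gt hx
  have h1 : HasDerivAt (fun y : ℝ => 1/y + Real.log y - 1) (-(x^2)⁻¹ + x⁻¹) x := by
    have := (hasDerivAt_inv hne).add (Real.hasDerivAt_log hne)
    simpa [one_div] using this.sub_const 1
  have h2 : HasDerivAt (fun y : ℝ => y - Real.log y - 1) (1 - x⁻¹) x := by
    simpa using ((hasDerivAt_id x).sub (Real.hasDerivAt_log hne)).sub_const 1
  have h := (h1.const_mul T).sub (h2.const_mul phi)
  refine h.congr_deriv ?_
  field_simp
  ring

lemma chord_lemma {v w : ℝ} (hv : 1 ≤ v) (hvw : v ≤ w) (hw : 1 < w) :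
    klf (1/w) * klf v ≤ klf (1/v) * klf w := by
  set T := klf w with hT
  set phi := klf (1/w) with hphi
  have hw0 : (0:ℝ) < w := by linarith
  have hphi_pos : 0 < phi := klf_pos (by positivity) (by
    intro h
    rw [div_eq_one_iff_eq (ne_of_gt hw0)] at h
    linarith)
  have hTphi : phi ≤ T := klf_inv_le (le_of_lt hw)
  set p := T / phi with hp
  have hp1 : 1 ≤ p := (one_le_div hphi_pos).2 hTphi
  have hpw : p ≤ w := by
    rw [hp, div_le_iff₀ hphi_pos]
    have := log_ge_pade (le_of_lt hw)
    rw [div_le_iff₀ (by linarith : (0:ℝ) < w + 1)] at this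
    rw [hT, hphi, klf_one_div hw0]
    unfold klf
    have hww : w * (1/w) = 1 := by field_simp
    nlinarith [hww]
  have hD1 : hfun T phi 1 = 0 := by unfold hfun; simp
  have hDw : hfun T phi w = 0 := by
    unfold hfun
    rw [hT, hphi, klf_one_div hw0]
    unfold klf
    ring
  have hDv : 0 ≤ hfun T phi v := by
    rcases le_total v p with hcase | hcase
    · have hmono : MonotoneOn (hfun T phi) (Set.Icc 1 p) := by
        apply monotoneOn_of_deriv_nonneg (convex_Icc 1 p)
        · intro x hx
          exact (hfun_hasDeriv (lt_of_lt_of_le one_pos hx.1)).continuousAt.continuousWithinAt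
        · intro x hx
          rw [interior_Icc] at hx
          exact (hfun_hasDeriv (lt_trans one_pos hx.1)).differentiableAt.differentiableWithinAt
        · intro x hx
          rw [interior_Icc] at hx
          have hx0 : (0:ℝ) < x := lt_trans one_pos hx.1
          rw [(hfun_hasDeriv hx0).deriv]
          apply mul_nonneg
          · apply div_nonneg (by linarith [hx.1]) (le_of_lt hx0)
          · rw [sub_nonneg, le_div_iff₀ hx0]
            calc phi * x ≤ phi * p := by nlinarith [hx.2]
            _ = T := by rw [hp]; field_simp
      have := hmono (Set.mem_Icc.2 ⟨le_rfl, hp1⟩) (Set.mem_Icc.2 ⟨hv, hcase⟩) hv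
      rw [hD1] at this; exact this
    · have hanti : AntitoneOn (hfun T phi) (Set.Icc p w) := by
        apply antitoneOn_of_deriv_nonpos (convex_Icc p w)
        · intro x hx
          exact (hfun_hasDeriv (lt_of_lt_of_le (lt_of_lt_of_le one_pos hp1) hx.1)).continuousAt.continuousWithinAt
        · intro x hx
          rw [interior_Icc] at hx
          exact (hfun_hasDeriv (lt_of_le_of_lt (le_trans one_pos.le hp1) hx.1)).differentiableAt.differentiableWithinAt
        · intro x hx
          rw [interior_Icc] at hx
          have hx1 : (1:ℝ) ≤ x := le_trans hp1 (le_of_lt hx.1)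
          have hx0 : (0:ℝ) < x := by linarith
          rw [(hfun_hasDeriv hx0).deriv]
          apply mul_nonpos_of_nonneg_of_nonpos
          · apply div_nonneg (by linarith) (le_of_lt hx0)
          · rw [sub_nonpos, div_le_iff₀ hx0]
            calc T = phi * p := by rw [hp]; field_simp
            _ ≤ phi * x := by nlinarith [hx.1]
      have := hanti (Set.mem_Icc.2 ⟨hcase, hvw⟩) (Set.mem_Icc.2 ⟨le_trans hcase hvw, le_rfl⟩) hvw
      rw [hDw] at this; exact this
  unfold hfun at hDv
  rw [← klf_one_div (by linarith : (0:ℝ) < v)] at hDv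
  have : klf v = v - Real.log v - 1 := rfl
  rw [← this] at hDv
  linarith

lemma klf_exists {a : ℝ} (ha : 0 ≤ a) : ∃ v, 1 ≤ v ∧ klf v = a := by
  have hb : (1:ℝ) ≤ (a+3)^2 := by nlinarith
  have hcont : ContinuousOn klf (Set.Icc 1 ((a+3)^2)) := by
    apply ContinuousOn.sub
    apply ContinuousOn.sub
    · fun_prop
    · intro x hx
      exact (Real.continuousAt_log (by simp at hx; nlinarith [hx.1])).continuousWithinAt
    · fun_prop
  have hval : klf ((a+3)^2) ≥ a := by
    have hlog : Real.log ((a+3)^2) = 2 * Real.log (a+3) := by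
      rw [Real.log_pow]; push_cast; ring
    have : Real.log (a+3) ≤ a + 2 := by
      have := Real.log_le_sub_one_of_pos (by linarith : (0:ℝ) < a + 3)
      linarith
    unfold klf
    rw [hlog]
    nlinarith
  have h1 : klf 1 = 0 := by unfold klf; simp
  have := intermediate_value_Icc hb hcont
  have hmem : a ∈ Set.Icc (klf 1) (klf ((a+3)^2)) := by
    rw [h1]; exact Set.mem_Icc.2 ⟨ha, hval⟩
  obtain ⟨v, hv, hveq⟩ := this hmem
  exact ⟨v, hv.1, hveq⟩

lemma scalar_main {n : ℕ} (lam c : Fin n → ℝ) (hlam : ∀ i, 0 < lam i)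
    {M w₂ : ℝ} (hM : 0 < M) (hw₂ : 1 < w₂) (hw₂f : w₂ - Real.log w₂ = 1 + 2 * M)
    (hsum : 2*M ≤ ∑ i, (klf (lam i) + (c i)^2)) :
    klf (1/w₂) ≤ ∑ i, (klf (1/(lam i)) + (c i)^2 / lam i) := by
  have hw₂0 : (0:ℝ) < w₂ := by linarith
  have hklfw₂ : klf w₂ = 2*M := by unfold klf; linarith
  set a : Fin n → ℝ := fun i => klf (lam i) + (c i)^2 with ha
  have hanonneg : ∀ i, 0 ≤ a i := fun i => by
    have := klf_nonneg (hlam i); positivity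
  choose v hv1 hv2 using fun i => klf_exists (hanonneg i)
  set b : Fin n → ℝ := fun i => klf (1/(lam i)) + (c i)^2 / lam i with hb
  have hbv : ∀ i, klf (1/(v i)) ≤ b i := fun i =>
    key_lemma (hlam i) (sq_nonneg (c i)) (hv1 i) (by simpa [ha] using (hv2 i).symm)
  have hbnonneg : ∀ i, 0 ≤ b i := fun i => by
    have h1 := klf_nonneg (one_div_pos.2 (hlam i))
    have h2 : 0 ≤ (c i)^2 / lam i := div_nonneg (sq_nonneg _) (hlam i).le
    simp only [hb]; linarith
  by_cases hcase : ∃ i, 2*M ≤ a i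
  · obtain ⟨i, hi⟩ := hcase
    have hvw : w₂ ≤ v i := by
      by_contra hc
      push_neg at hc
      have := klf_strictMono (hv1 i) hc
      rw [hv2 i, hklfw₂] at this
      linarith
    have hinv : klf (1/w₂) ≤ klf (1/(v i)) := by
      apply klf_anti (one_div_pos.2 (by linarith [hv1 i] : (0:ℝ) < v i))
      · apply div_le_div_of_nonneg_left one_pos.le hw₂0 hvw
      · rw [div_le_one hw₂0]; linarith
    calc klf (1/w₂) ≤ b i := le_trans hinv (hbv i)
    _ ≤ ∑ j, b j := Finset.single_le_sum (fun j _ => hbnonneg j) (Finset.mem_univ i)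
  · push_neg at hcase
    have hvw : ∀ i, v i ≤ w₂ := fun i => by
      by_contra hc
      push_neg at hc
      have := klf_strictMono (le_of_lt hw₂) hc
      rw [hv2 i, hklfw₂] at this
      exact absurd (hcase i) (not_lt.2 (le_of_lt this))
    have hchord : ∀ i, klf (1/w₂) * a i ≤ klf (1/(v i)) * (2*M) := fun i => by
      have := chord_lemma (hv1 i) (hvw i) hw₂
      rw [hv2 i, hklfw₂] at this
      linarith [this]
    have hphinn : 0 ≤ klf (1/w₂) := klf_nonneg (by positivity)
    have hs1 : klf (1/w₂) * (2*M) ≤ klf (1/w₂) * (∑ i, a i) := by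
      apply mul_le_mul_of_nonneg_left hsum hphinn
    have hs2 : klf (1/w₂) * (∑ i, a i) ≤ (∑ i, klf (1/(v i))) * (2*M) := by
      rw [Finset.mul_sum, Finset.sum_mul]
      exact Finset.sum_le_sum (fun i _ => hchord i)
    have hs3 : (∑ i, klf (1/(v i))) ≤ ∑ i, b i :=
      Finset.sum_le_sum (fun i _ => hbv i)
    have h2M : (0:ℝ) < 2*M := by linarith
    have hfin : klf (1/w₂) * (2*M) ≤ (∑ i, b i) * (2*M) := by
      calc klf (1/w₂) * (2*M) ≤ (∑ i, klf (1/(v i))) * (2*M) := le_trans hs1 hs2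
      _ ≤ (∑ i, b i) * (2*M) := mul_le_mul_of_nonneg_right hs3 (le_of_lt h2M)
    exact le_of_mul_le_mul_right hfin h2M

/-- If KL(N(μ,Σ) ∥ N(0,I)) ≥ M > 0, then
KL(N(0,I) ∥ N(μ,Σ)) ≥ (1/2)(1/w₂(2M) - log(1/w₂(2M)) - 1). -/
theorem stmt14 (n : ℕ) (μ : Fin n → ℝ) (S : Matrix (Fin n) (Fin n) ℝ)
    (hS : S.PosDef) (M w₂ : ℝ) (hM : 0 < M)
    (hw₂ : w₂ ∈ Set.Ioi (1 : ℝ)) (hw₂f : w₂ - Real.log w₂ = 1 + 2 * M)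
    (hKL : M ≤ (1/2) * (-Real.log S.det + S.trace + μ ⬝ᵥ μ - n)) :
    (1/2) * (1 / w₂ - Real.log (1 / w₂) - 1) ≤
      (1/2) * (Real.log S.det + (S⁻¹).trace + μ ⬝ᵥ (S⁻¹).mulVec μ - n) := by
  have hw₂1 : (1:ℝ) < w₂ := hw₂
  -- spectral decomposition
  have hH : S.IsHermitian := hS.1
  set U : Matrix (Fin n) (Fin n) ℝ :=
    (Matrix.IsHermitian.eigenvectorUnitary hH : Matrix (Fin n) (Fin n) ℝ) with hU
  set d : Fin n → ℝ := hH.eigenvalues with hd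
  have hdpos : ∀ i, 0 < d i := hS.eigenvalues_pos
  have hspec : S = U * diagonal d * star U := by
    have := hH.spectral_theorem
    simpa using this
  have hU1 : U * star U = 1 :=
    (Matrix.mem_unitaryGroup_iff).mp (Matrix.IsHermitian.eigenvectorUnitary hH).2
  have hU2 : star U * U = 1 :=
    (Matrix.mem_unitaryGroup_iff').mp (Matrix.IsHermitian.eigenvectorUnitary hH).2
  have htr : S.trace = ∑ i, d i := by
    rw [hspec, Matrix.trace_mul_cycle, hU2, Matrix.one_mul, Matrix.trace_diagonal]
  have hdet : S.det = ∏ i, d i := by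
    have := hH.det_eq_prod_eigenvalues
    simpa using this
  have hdiagmul : diagonal d * diagonal (fun i => (d i)⁻¹) = 1 := by
    rw [Matrix.diagonal_mul_diagonal]
    have h : (fun i => d i * (d i)⁻¹) = fun _ => (1:ℝ) :=
      funext fun i => mul_inv_cancel₀ (ne_of_gt (hdpos i))
    simp only [h]
    exact Matrix.diagonal_one
  have hinv : S⁻¹ = U * diagonal (fun i => (d i)⁻¹) * star U := by
    apply Matrix.inv_eq_right_inv
    rw [hspec]
    calc U * diagonal d * star U * (U * diagonal (fun i => (d i)⁻¹) * star U)
        = U * (diagonal d * ((star U * U) * diagonal (fun i => (d i)⁻¹))) * star U := by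
          simp only [Matrix.mul_assoc]
      _ = 1 := by rw [hU2, Matrix.one_mul, hdiagmul, Matrix.mul_one, hU1]
  have htrinv : (S⁻¹).trace = ∑ i, (d i)⁻¹ := by
    rw [hinv, Matrix.trace_mul_cycle, hU2, Matrix.one_mul, Matrix.trace_diagonal]
  set c : Fin n → ℝ := (star U) *ᵥ μ with hc
  have hcvec : μ ᵥ* U = c := by
    rw [hc, Matrix.star_eq_conjTranspose, Matrix.conjTranspose_eq_transpose_of_trivial,
      Matrix.mulVec_transpose]
  have hdot : μ ⬝ᵥ μ = ∑ i, (c i)^2 := by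
    have h1 : μ ⬝ᵥ μ = μ ⬝ᵥ ((U * star U) *ᵥ μ) := by rw [hU1]; simp
    rw [h1, ← Matrix.mulVec_mulVec, Matrix.dotProduct_mulVec, hcvec, ← hc]
    simp [dotProduct, pow_two]
  have hquad : μ ⬝ᵥ (S⁻¹ *ᵥ μ) = ∑ i, (c i)^2 * (d i)⁻¹ := by
    rw [hinv, ← Matrix.mulVec_mulVec, ← Matrix.mulVec_mulVec, Matrix.dotProduct_mulVec, hcvec]
    simp [dotProduct, Matrix.mulVec_diagonal, pow_two]
    congr 1
    funext i
    ring
  have hlogdet : Real.log S.det = ∑ i, Real.log (d i) := by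
    rw [hdet]
    exact Real.log_prod (fun i _ => ne_of_gt (hdpos i))
  -- reduce to scalar statement
  have e1 : ∑ i, (klf (d i) + (c i)^2)
      = (∑ i, d i) - (∑ i, Real.log (d i)) - n + ∑ i, (c i)^2 := by
    unfold klf
    rw [Finset.sum_add_distrib, Finset.sum_sub_distrib, Finset.sum_sub_distrib,
      Finset.sum_const, Finset.card_univ, Fintype.card_fin]
    push_cast
    ring
  have hsum : 2*M ≤ ∑ i, (klf (d i) + (c i)^2) := by
    rw [e1, ← hlogdet, ← htr, ← hdot]
    linarith
  have hmain := scalar_main d c hdpos hM hw₂1 hw₂f hsum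
  have e2 : ∑ i, (klf (1/(d i)) + (c i)^2 / d i)
      = (∑ i, Real.log (d i)) + (∑ i, (d i)⁻¹) + (∑ i, (c i)^2 * (d i)⁻¹) - n := by
    have : ∀ i, klf (1/(d i)) + (c i)^2 / d i
        = Real.log (d i) + (d i)⁻¹ + (c i)^2 * (d i)⁻¹ - 1 := fun i => by
      have hne := (hdpos i).ne'
      rw [klf_one_div (hdpos i)]
      field_simp
      ring
    rw [Finset.sum_congr rfl (fun i _ => this i)]
    rw [Finset.sum_sub_distrib, Finset.sum_add_distrib, Finset.sum_add_distrib,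
      Finset.sum_const, Finset.card_univ, Fintype.card_fin]
    push_cast
    ring
  rw [e2] at hmain
  have hlhs : klf (1/w₂) = 1 / w₂ - Real.log (1 / w₂) - 1 := rfl
  rw [hlogdet, htrinv]
  have : μ ⬝ᵥ (S⁻¹).mulVec μ = ∑ i, (c i)^2 * (d i)⁻¹ := hquad
  rw [this]
  rw [← hlhs]
  linarith
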